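/- Let (Λ, 𝔪) be a Noetherian complete local domain with a non-trivial valuation compatible with the 𝔪-adic topology. Let g = Σ_{i≥0} b_i x^i ∈ Λ⟦x⟧ be nonzero, let d be the least index with b_d ≠ 0, and let a ∈ 𝔪 ∖ {0} with ν(a) > ν(b_d). Then ν(g(a)) = ν(b_d a^d), and in particular g(a) ≠ 0. -/

import Mathlib

open scoped BigOperators

/-- A non-trivial valuation on a commutative ring. -/
def IsNontrivialValuation {Λ : Type*} [CommRing Λ] (ν : Λ → ℕ∞) : Prop :=
  (∀ a b : Λ, ν (a * b) = ν a + ν b) ∧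
  (∀ a b : Λ, min (ν a) (ν b) ≤ ν (a + b)) ∧
  (∀ a : Λ, ν a = ⊤ ↔ a = 0) ∧
  (∃ a : Λ, ν a ≠ 0 ∧ ν a ≠ ⊤)

/-- `ν` is compatible with the `I`-adic topology: the filtration `{a | ν a ≥ n}` and the
filtration by powers of `I` are interleaved, i.e. induce the same linear topology. -/
def CompatibleWithAdic {Λ : Type*} [CommRing Λ] (I : Ideal Λ) (ν : Λ → ℕ∞) : Prop :=
  (∀ n : ℕ, ∃ m : ℕ, ∀ a ∈ I ^ m, (n : ℕ∞) ≤ ν a) ∧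
  (∀ n : ℕ, ∃ m : ℕ, ∀ a : Λ, (m : ℕ∞) ≤ ν a → a ∈ I ^ n)

/-- `x` is the value `g(a) = Σ_i b_i a^i` of the power series `g` at `a ∈ 𝔪`: the partial
sums converge `𝔪`-adically to `x`.  (In an `𝔪`-adically complete and separated ring this
determines `x` uniquely.) -/
def IsEvalAt {Λ : Type*} [CommRing Λ] [IsLocalRing Λ] (g : PowerSeries Λ) (a : Λ) (x : Λ) :
    Prop :=
  ∀ ℓ : ℕ, x - ∑ i ∈ Finset.range ℓ, PowerSeries.coeff i g * a ^ i
    ∈ (IsLocalRing.maximalIdeal Λ) ^ ℓ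

/-!
Split a partial sum of `g(a)` as `b_d a^d` plus the other terms, and write `g(a)` as that partial
sum plus a remainder in `𝔪^ℓ`. Every other term `b_i a^i`, `i > d`, has value at least
`ν(a^d) + ν(a) > ν(a^d) + ν(b_d)` because `ν ≥ 0`, and the remainder has value as large as we like
by compatibility of `ν` with the `𝔪`-adic topology. The strict ultrametric inequality then
forces `ν(g(a)) = ν(b_d a^d)`, which is finite.
-/

namespace IsNontrivialValuation

variable {Λ : Type*} [CommRing Λ] {ν : Λ → ℕ∞}

theorem map_eq_top_iff (hν : IsNontrivialValuation ν) {a : Λ} : ν a = ⊤ ↔ a = 0 :=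
  hν.2.2.1 a

theorem map_one (hν : IsNontrivialValuation ν) : ν 1 = 0 := by
  obtain ⟨hmul, -, -, a, -, ha⟩ := hν
  have h : ν a + ν 1 = ν a + 0 := by rw [← hmul, mul_one, add_zero]
  exact (WithTop.add_left_inj ha).1 h

def toAddValuation (hν : IsNontrivialValuation ν) : AddValuation Λ ℕ∞ :=
  AddValuation.of ν (hν.map_eq_top_iff.2 rfl) hν.map_one hν.2.1 hν.1

end IsNontrivialValuation

theorem CompatibleWithAdic.exists_lt_of_mem_pow {Λ : Type*} [CommRing Λ] {I : Ideal Λ}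
    {ν : Λ → ℕ∞} (hcompat : CompatibleWithAdic I ν) {c : ℕ∞} (hc : c ≠ ⊤) :
    ∃ m : ℕ, ∀ r ∈ I ^ m, c < ν r := by
  obtain ⟨m, hm⟩ := hcompat.1 (c.toNat + 1)
  refine ⟨m, fun r hr => lt_of_lt_of_le ?_ (hm r hr)⟩
  rw [← ENat.natCast_toNat hc]
  exact_mod_cast Nat.lt_succ_self _

namespace AddValuation

variable {R : Type*} [CommRing R] (v : AddValuation R ℕ∞) {b : ℕ → R} {d : ℕ} {a : R}

theorem map_pow_ne_top (ha : v a ≠ ⊤) (n : ℕ) : v (a ^ n) ≠ ⊤ := by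
  rw [v.map_pow, nsmul_eq_mul]
  exact WithTop.mul_ne_top (ENat.natCast_ne_top n) ha

theorem map_mul_pow_ne_top (hb : v (b d) < v a) (ha : v a ≠ ⊤) : v (b d * a ^ d) ≠ ⊤ := by
  rw [v.map_mul]
  exact WithTop.add_ne_top.2 ⟨hb.ne_top, v.map_pow_ne_top ha d⟩

theorem map_mul_pow_lt_of_ne (hdmin : ∀ i < d, b i = 0) (hb : v (b d) < v a) (ha : v a ≠ ⊤)
    {i : ℕ} (hi : i ≠ d) : v (b d * a ^ d) < v (b i * a ^ i) := by
  have hfin := v.map_mul_pow_ne_top hb ha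
  rcases hi.lt_or_gt with hlt | hgt
  · rw [hdmin i hlt, zero_mul, v.map_zero]
    exact hfin.lt_top
  · obtain ⟨k, rfl⟩ := Nat.exists_eq_add_of_lt hgt
    calc v (b d * a ^ d) = v (a ^ d) + v (b d) := by rw [v.map_mul, add_comm]
      _ < v (a ^ d) + v a := (ENat.add_lt_add_iff_left (v.map_pow_ne_top ha d)).2 hb
      _ ≤ v (a ^ d) + v a + v (b (d + k + 1) * a ^ k) := le_self_add
      _ = v (b (d + k + 1) * a ^ (d + k + 1)) := by
        rw [← v.map_mul, ← v.map_mul]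
        ring_nf

theorem lt_map_sum_range_sub (hdmin : ∀ i < d, b i = 0) (hb : v (b d) < v a) (ha : v a ≠ ⊤)
    {ℓ : ℕ} (hℓ : d < ℓ) :
    v (b d * a ^ d) < v (∑ i ∈ Finset.range ℓ, b i * a ^ i - b d * a ^ d) := by
  rw [← Finset.sum_erase_eq_sub (Finset.mem_range.2 hℓ)]
  exact v.map_lt_sum (v.map_mul_pow_ne_top hb ha) fun i hi =>
    v.map_mul_pow_lt_of_ne hdmin hb ha (Finset.ne_of_mem_erase hi)

end AddValuation

theorem nu_eval_eq_nu_leading_general {Λ : Type*} [CommRing Λ] [IsLocalRing Λ]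
    (ν : Λ → ℕ∞) (hν : IsNontrivialValuation ν)
    (hcompat : CompatibleWithAdic (IsLocalRing.maximalIdeal Λ) ν)
    (g : PowerSeries Λ) (d : ℕ)
    (hdmin : ∀ i < d, PowerSeries.coeff i g = 0)
    (a : Λ) (ha0 : a ≠ 0)
    (hva : ν (PowerSeries.coeff d g) < ν a)
    (x : Λ) (hx : IsEvalAt g a x) :
    ν x = ν (PowerSeries.coeff d g * a ^ d) ∧ x ≠ 0 := by
  set v := hν.toAddValuation
  set b : ℕ → Λ := fun i => PowerSeries.coeff i g
  have ha : v a ≠ ⊤ := fun h => ha0 (hν.map_eq_top_iff.1 h)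
  have hfin : v (b d * a ^ d) ≠ ⊤ := v.map_mul_pow_ne_top hva ha
  obtain ⟨m, hm⟩ := hcompat.exists_lt_of_mem_pow hfin
  set s := ∑ i ∈ Finset.range (max m (d + 1)), b i * a ^ i
  have htail : v (b d * a ^ d) < v (s - b d * a ^ d) :=
    v.lt_map_sum_range_sub hdmin hva ha (by omega)
  have hrem : v (b d * a ^ d) < v (x - s) :=
    hm _ (Ideal.pow_le_pow_right (le_max_left _ _) (hx _))
  have hval : ν x = ν (b d * a ^ d) :=
    calc ν x = v (b d * a ^ d + ((s - b d * a ^ d) + (x - s))) := by congr 1; ring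
      _ = ν (b d * a ^ d) :=
        v.map_add_eq_of_lt_left (lt_of_lt_of_le (lt_min htail hrem) (v.map_add _ _))
  exact ⟨hval, fun hx0 => hfin (hval.symm.trans (hν.map_eq_top_iff.2 hx0))⟩

/-- Let `(Λ, 𝔪)` be a Noetherian complete local domain with a non-trivial valuation `ν`
compatible with the `𝔪`-adic topology.  Let `g = Σ_{i ≥ 0} b_i x^i ∈ Λ⟦x⟧` be non-zero, let
`d` be the least index with `b_d ≠ 0`, and let `a ∈ 𝔪 ∖ {0}` with `ν a > ν (b_d)`.  Then
`ν (g(a)) = ν (b_d * a^d)`; in particular `g(a) ≠ 0`. -/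
theorem nu_eval_eq_nu_leading {Λ : Type*} [CommRing Λ] [IsDomain Λ]
    [IsNoetherianRing Λ] [IsLocalRing Λ]
    (hcomplete : IsAdicComplete (IsLocalRing.maximalIdeal Λ) Λ)
    (ν : Λ → ℕ∞) (hν : IsNontrivialValuation ν)
    (hcompat : CompatibleWithAdic (IsLocalRing.maximalIdeal Λ) ν)
    (g : PowerSeries Λ) (d : ℕ)
    (hd : PowerSeries.coeff d g ≠ 0) (hdmin : ∀ i < d, PowerSeries.coeff i g = 0)
    (a : Λ) (ha : a ∈ IsLocalRing.maximalIdeal Λ) (ha0 : a ≠ 0)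
    (hva : ν (PowerSeries.coeff d g) < ν a)
    (x : Λ) (hx : IsEvalAt g a x) :
    ν x = ν (PowerSeries.coeff d g * a ^ d) ∧ x ≠ 0 :=
  nu_eval_eq_nu_leading_general ν hν hcompat g d hdmin a ha0 hva x hx
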